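/- Let m ≥ 1 and consider the SPN S over ι = Fin m with α i = Bool for all i, defined as the product of SPNs S_1, …, S_m, where each S_i is a Sum node over variable i with four leaf children and weights 5/16, 11/48, 11/48, 11/48: the first leaf is p with p(true) = 1, p(false) = 0, and each of the other three leaves is p with p(true) = 0, p(false) = 1. Then pd(S) = (5/16)^m and max over configurations x : Fin m → Bool of S(x) = (11/16)^m; consequently max_x S(x) > 2^m · pd(S). -/

import Mathlib

open scoped NNReal

/-- Sum-product networks over index set `ι` with variable domains `α i`, indexed by scope. -/
inductive SPN (ι : Type) (α : ι → Type) : Set ι → Type where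
  | leaf (i : ι) (p : α i → ℝ≥0) : SPN ι α {i}
  | sum {sc : Set ι} (t : ℕ) (ht : 1 ≤ t) (child : Fin t → SPN ι α sc)
      (w : Fin t → ℝ≥0) (hw : ∑ j, w j = 1) : SPN ι α sc
  | prod (t : ℕ) (scs : Fin t → Set ι)
      (hd : Pairwise fun j k => Disjoint (scs j) (scs k))
      (child : ∀ j, SPN ι α (scs j)) : SPN ι α (⋃ j, scs j)

/-- The value of an SPN at a configuration. -/
noncomputable def SPN.eval {ι : Type} {α : ι → Type} :
    {sc : Set ι} → SPN ι α sc → (∀ i, α i) → ℝ≥0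
  | _, .leaf i p, x => p (x i)
  | _, .sum _ _ child w _, x => ∑ j, w j * (child j).eval x
  | _, .prod _ _ _ child, x => ∏ j, (child j).eval x

/-- The upward pass of the max-product algorithm. -/
noncomputable def SPN.pd {ι : Type} {α : ι → Type} :
    {sc : Set ι} → SPN ι α sc → ℝ≥0
  | _, .leaf _ p => ⨆ v, p v
  | _, .sum _ _ child w _ => ⨆ j, w j * (child j).pd
  | _, .prod _ _ _ child => ∏ j, (child j).pd

/-- The product over all sum nodes of the number of their children. -/
def SPN.D {ι : Type} {α : ι → Type} :
    {sc : Set ι} → SPN ι α sc → ℕ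
  | _, .leaf _ _ => 1
  | _, .sum t _ child _ _ => t * ∏ j, (child j).D
  | _, .prod _ _ _ child => ∏ j, (child j).D

/-- The sum node `S_i` over variable `i` with four leaf children and weights
`5/16, 11/48, 11/48, 11/48`: the first leaf puts all mass on `true`, the other three
put all mass on `false`. -/
noncomputable def Si (m : ℕ) (i : Fin m) : SPN (Fin m) (fun _ => Bool) {i} :=
  .sum 4 (by norm_num)
    (fun j => if j = 0 then .leaf i (fun b => if b then 1 else 0)
              else .leaf i (fun b => if b then 0 else 1))
    (fun j => if j = 0 then 5 / 16 else 11 / 48)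
    (by simp [Fin.sum_univ_four]; rw [← NNReal.coe_inj]; push_cast; norm_num)

/-- The product of `S_1, …, S_m`. -/
noncomputable def Sbig (m : ℕ) : SPN (Fin m) (fun _ => Bool) (⋃ i, ({i} : Set (Fin m))) :=
  .prod m (fun i => {i}) (fun _ _ hjk => Set.disjoint_singleton.mpr hjk)
    (fun i => Si m i)

/-! Each factor `S_i` evaluates to `5/16` at `true` and to `3 · 11/48 = 11/16` at `false`, but the
max-product pass only sees the single heaviest child, of weight `5/16`. Both quantities factor
over the product node, so `pd(S) = (5/16)^m` while `max_x S(x) = (11/16)^m > 2^m (5/16)^m`. -/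

theorem ciSup_eq_of_forall_le_of_eq {ι α : Type*} [ConditionallyCompleteLattice α]
    {f : ι → α} {a : α} (hle : ∀ i, f i ≤ a) (i₀ : ι) (hi₀ : f i₀ = a) :
    ⨆ i, f i = a :=
  IsGreatest.csSup_eq ⟨⟨i₀, hi₀⟩, by rintro _ ⟨i, rfl⟩; exact hle i⟩

theorem Si_eval (m : ℕ) (i : Fin m) (x : Fin m → Bool) :
    (Si m i).eval x = if x i then 5 / 16 else 11 / 16 := by
  cases hx : x i <;> simp [Si, SPN.eval, Fin.sum_univ_four, hx]
  rw [← NNReal.coe_inj]; push_cast; norm_num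

theorem Si_pd (m : ℕ) (i : Fin m) : (Si m i).pd = 5 / 16 := by
  have pd_indicator_true :
      (SPN.leaf (α := fun _ => Bool) i (fun b => if b then 1 else 0)).pd = 1 :=
    ciSup_eq_of_forall_le_of_eq (by simp [apply_ite]) true rfl
  have pd_indicator_false :
      (SPN.leaf (α := fun _ => Bool) i (fun b => if b then 0 else 1)).pd = 1 :=
    ciSup_eq_of_forall_le_of_eq (by simp [apply_ite]) false rfl
  refine ciSup_eq_of_forall_le_of_eq (fun j => ?_) 0 (by simp [pd_indicator_true])
  by_cases hj : j = 0
  · simp [hj, pd_indicator_true]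
  · simp only [hj, if_false, pd_indicator_false, mul_one]
    rw [← NNReal.coe_le_coe]; push_cast; norm_num

theorem Sbig_pd (m : ℕ) : (Sbig m).pd = (5 / 16) ^ m := by
  simp [Sbig, SPN.pd, Si_pd, div_pow]

theorem iSup_Sbig_eval (m : ℕ) : ⨆ x : Fin m → Bool, (Sbig m).eval x = (11 / 16) ^ m := by
  have eval_eq (x : Fin m → Bool) :
      (Sbig m).eval x = ∏ i, if x i then (5 / 16 : ℝ≥0) else 11 / 16 := by
    simp [Sbig, SPN.eval, Si_eval]
  refine ciSup_eq_of_forall_le_of_eq (fun x => ?_) (fun _ => false) (by simp [eval_eq, div_pow])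
  have factor_le (b : Bool) : (if b then (5 / 16 : ℝ≥0) else 11 / 16) ≤ 11 / 16 := by
    cases b
    · exact le_rfl
    · rw [← NNReal.coe_le_coe]; push_cast; norm_num
  simpa [eval_eq] using Finset.prod_le_pow_card Finset.univ _ _ fun i _ => factor_le (x i)

/-- For the SPN `S = Π_i S_i` above, `pd(S) = (5/16)^m` and
`max_x S(x) = (11/16)^m`; consequently `max_x S(x) > 2^m · pd(S)`. -/
theorem stmt15 (m : ℕ) (hm : 1 ≤ m) :
    (Sbig m).pd = (5 / 16 : ℝ≥0) ^ m ∧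
    (⨆ x : Fin m → Bool, (Sbig m).eval x) = (11 / 16 : ℝ≥0) ^ m ∧
    (2 : ℝ≥0) ^ m * (Sbig m).pd < ⨆ x : Fin m → Bool, (Sbig m).eval x := by
  refine ⟨Sbig_pd m, iSup_Sbig_eval m, ?_⟩
  rw [Sbig_pd, iSup_Sbig_eval, ← mul_pow]
  refine pow_lt_pow_left₀ ?_ zero_le (by omega)
  rw [← NNReal.coe_lt_coe]; push_cast; norm_num
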